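/- The leading Harer–Zagier coefficient has the closed form b(g, g−1) = 2^{g−1} · (6g−3)!! / (3^g · g!) for every integer g ≥ 1, where (6g−3)!! denotes the double factorial. -/
import Mathlib


/-- Closed form for the leading Harer–Zagier coefficient:
`b g (g-1) = 2^(g-1) * (6g-3)‼ / (3^g * g!)` for every `g ≥ 1`. -/
theorem harer_zagier_leading_coefficient
    (b : ℕ → ℤ → ℚ)
    (hb1 : b 1 0 = 1)
    (hb0 : ∀ g : ℕ, 1 ≤ g → ∀ k : ℤ, (k < 0 ∨ (g : ℤ) - 1 < k) → b g k = 0)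
    (hrec : ∀ g : ℕ, 1 ≤ g → ∀ k : ℤ,
      (4 * (g : ℚ) + 2 * (k : ℚ) + 6) * b (g + 1) k =
        (4 * (g : ℚ) + 2 * (k : ℚ) + 1) * (4 * (g : ℚ) + 2 * (k : ℚ) + 3) *
          ((4 * (g : ℚ) + 2 * (k : ℚ) + 2) * b g k
            + 4 * (4 * (g : ℚ) + 2 * (k : ℚ) - 1) * b g (k - 1))) :
    ∀ g : ℕ, 1 ≤ g →
      b g ((g : ℤ) - 1) =
        ((2 ^ (g - 1) * Nat.doubleFactorial (6 * g - 3) : ℕ) : ℚ) /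
          ((3 ^ g * Nat.factorial g : ℕ) : ℚ) := by
  intro g hg
  induction g, hg using Nat.le_induction with
  | base =>
    norm_num [hb1, Nat.doubleFactorial, Nat.factorial]
  | succ g hg ih =>
    obtain ⟨m, rfl⟩ : ∃ m, g = m + 1 := ⟨g - 1, (Nat.succ_pred_eq_of_pos hg).symm⟩
    have hrec' := hrec (m + 1) (by omega) ((m : ℤ) + 1)
    have h0 : b (m + 1) ((m : ℤ) + 1) = 0 := by
      apply hb0 (m + 1) (by omega)
      right; push_cast; linarith
    rw [h0] at hrec'
    have hk1 : ((m : ℤ) + 1) - 1 = ((m + 1 : ℕ) : ℤ) - 1 := by push_cast; ring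
    rw [hk1, ih] at hrec'
    have hk2 : (((m + 1 + 1 : ℕ)) : ℤ) - 1 = (m : ℤ) + 1 := by push_cast; ring
    rw [hk2]
    -- simplify nat subtractions
    have e1 : 6 * (m + 1) - 3 = 6 * m + 3 := by omega
    have e2 : 6 * (m + 1 + 1) - 3 = 6 * m + 9 := by omega
    have e3 : (m + 1) - 1 = m := by omega
    have e4 : (m + 1 + 1) - 1 = m + 1 := by omega
    rw [e1, e3] at hrec'
    rw [e2, e4]
    -- unfold double factorial of 6m+9
    have hdf : Nat.doubleFactorial (6 * m + 9)
        = (6 * m + 9) * ((6 * m + 7) * ((6 * m + 5) * Nat.doubleFactorial (6 * m + 3))) := by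
      have h9 : 6 * m + 9 = (6 * m + 7) + 2 := by ring
      have h7 : 6 * m + 7 = (6 * m + 5) + 2 := by ring
      have h5 : 6 * m + 5 = (6 * m + 3) + 2 := by ring
      rw [h9, Nat.doubleFactorial_add_two, h7, Nat.doubleFactorial_add_two,
        h5, Nat.doubleFactorial_add_two]
    rw [hdf, Nat.factorial_succ (m + 1)]
    -- key nonzero facts
    have hQ : ((3 ^ (m + 1) * Nat.factorial (m + 1) : ℕ) : ℚ) ≠ 0 := by
      positivity
    have hQ2 : ((3 : ℕ) : ℚ) ^ (m + 1 + 1) ≠ 0 := by positivity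
    have hm2 : ((m : ℚ) + 2) ≠ 0 := by positivity
    -- solve the linear equation
    have hcoef : (4 * ((m + 1 : ℕ) : ℚ) + 2 * (((m : ℤ) + 1 : ℤ) : ℚ) + 6) ≠ 0 := by
      push_cast; positivity
    have hb' : b (m + 1 + 1) ((m : ℤ) + 1)
        = (4 * ((m + 1 : ℕ) : ℚ) + 2 * (((m : ℤ) + 1 : ℤ) : ℚ) + 1)
          * (4 * ((m + 1 : ℕ) : ℚ) + 2 * (((m : ℤ) + 1 : ℚ)) + 3)
          * ((4 * ((m + 1 : ℕ) : ℚ) + 2 * (((m : ℤ) + 1 : ℚ)) + 2) * 0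
            + 4 * (4 * ((m + 1 : ℕ) : ℚ) + 2 * (((m : ℤ) + 1 : ℚ)) - 1)
              * (((2 ^ m * Nat.doubleFactorial (6 * m + 3) : ℕ) : ℚ)
                / ((3 ^ (m + 1) * Nat.factorial (m + 1) : ℕ) : ℚ)))
          / (4 * ((m + 1 : ℕ) : ℚ) + 2 * (((m : ℤ) + 1 : ℚ)) + 6) := by
      field_simp at hrec' ⊢
      push_cast at hrec' ⊢
      linarith [hrec']
    rw [hb']
    have hFne : (Nat.factorial (m + 1) : ℚ) ≠ 0 := by
      exact_mod_cast Nat.factorial_ne_zero (m + 1)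
    push_cast
    field_simp
    ring
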